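/- On D, the reduced Codazzi equations of Kerr–Newman hold: (e₁ + i e₂)(conj(trX)) + Z₁ · conj(trX) = (trX − conj(trX)) H₁ and (e₁ + i e₂)(conj(tr X̲)) − Z₁ · conj(tr X̲) = (tr X̲ − conj(tr X̲)) H̲₁, where trX := 2/q, tr X̲ := −2Δ/(q q̄²), H₁ := i a sin θ · q/|q|³, H̲₁ := −i a sin θ · q̄/|q|³ and Z₁ := i a sin θ · q̄/|q|³. (These are the first components of the equations 𝒟^(c) conj(trX) = (trX − conj(trX))H and 𝒟^(c) conj(tr X̲) = (tr X̲ − conj(tr X̲))H̲, where the conformal angular derivative of a scalar of conformal type s is 𝒟^(c) f = (e₁+ie₂)f + s Z₁ f, and trX, tr X̲ have conformal types +1, −1 respectively.) -/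

import Mathlib

noncomputable section

namespace KerrNewman

/-- A point `x = (t, r, θ, φ)` of the coordinate domain, with indices `0,1,2,3`. -/
abbrev Pt : Type := Fin 4 → ℝ

/-- Partial derivative `∂_μ` of a complex-valued function on `ℝ⁴`. -/
def pdC (μ : Fin 4) (f : Pt → ℂ) (x : Pt) : ℂ := fderiv ℝ f x (Pi.single μ 1)

/-- Partial derivative `∂_μ` of a real-valued function on `ℝ⁴`. -/
def pdR (μ : Fin 4) (f : Pt → ℝ) (x : Pt) : ℝ := fderiv ℝ f x (Pi.single μ 1)

/-- `Δ = r² − 2Mr + a² + Q²`. -/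
def Del (M a Q : ℝ) (x : Pt) : ℝ := x 1 ^ 2 - 2 * M * x 1 + a ^ 2 + Q ^ 2

/-- `|q|² = r² + a² cos²θ`. -/
def q2 (a : ℝ) (x : Pt) : ℝ := x 1 ^ 2 + a ^ 2 * Real.cos (x 2) ^ 2

/-- `q = r + i a cos θ`. -/
def qC (a : ℝ) (x : Pt) : ℂ := (x 1 : ℂ) + Complex.I * (a : ℂ) * (Real.cos (x 2) : ℂ)

/-- `q̄ = r − i a cos θ`. -/
def qbarC (a : ℝ) (x : Pt) : ℂ := (x 1 : ℂ) - Complex.I * (a : ℂ) * (Real.cos (x 2) : ℂ)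

/-- `e₄ = ((r²+a²)/Δ)∂_t + ∂_r + (a/Δ)∂_φ` as an operator on complex functions. -/
def e4 (M a Q : ℝ) (f : Pt → ℂ) (x : Pt) : ℂ :=
  (((x 1 ^ 2 + a ^ 2) / Del M a Q x : ℝ) : ℂ) * pdC 0 f x + pdC 1 f x
    + ((a / Del M a Q x : ℝ) : ℂ) * pdC 3 f x

/-- `e₃ = ((r²+a²)/|q|²)∂_t − (Δ/|q|²)∂_r + (a/|q|²)∂_φ` as an operator on
complex functions. -/
def e3 (M a Q : ℝ) (f : Pt → ℂ) (x : Pt) : ℂ :=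
  (((x 1 ^ 2 + a ^ 2) / q2 a x : ℝ) : ℂ) * pdC 0 f x
    - ((Del M a Q x / q2 a x : ℝ) : ℂ) * pdC 1 f x
    + ((a / q2 a x : ℝ) : ℂ) * pdC 3 f x

/-- `e₁ = (1/√(|q|²))∂_θ` as an operator on complex functions. -/
def e1 (a : ℝ) (f : Pt → ℂ) (x : Pt) : ℂ :=
  ((1 / Real.sqrt (q2 a x) : ℝ) : ℂ) * pdC 2 f x

/-- `e₂ = (a sinθ/√(|q|²))∂_t + (1/(√(|q|²) sinθ))∂_φ` as an operator on
complex functions. -/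
def e2 (a : ℝ) (f : Pt → ℂ) (x : Pt) : ℂ :=
  ((a * Real.sin (x 2) / Real.sqrt (q2 a x) : ℝ) : ℂ) * pdC 0 f x
    + ((1 / (Real.sqrt (q2 a x) * Real.sin (x 2)) : ℝ) : ℂ) * pdC 3 f x

/-- `e₄` as an operator on real-valued functions. -/
def e4R (M a Q : ℝ) (f : Pt → ℝ) (x : Pt) : ℝ :=
  ((x 1 ^ 2 + a ^ 2) / Del M a Q x) * pdR 0 f x + pdR 1 f x
    + (a / Del M a Q x) * pdR 3 f x

/-- `trX = 2/q`. -/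
def trX (a : ℝ) (x : Pt) : ℂ := 2 / qC a x

/-- `tr X̲ = −2Δ/(q q̄²)`. -/
def trXb (M a Q : ℝ) (x : Pt) : ℂ :=
  -2 * ((Del M a Q x : ℝ) : ℂ) / (qC a x * qbarC a x ^ 2)

/-- `H₁ = i a sinθ · q / |q|³`. -/
def H1 (a : ℝ) (x : Pt) : ℂ :=
  Complex.I * (a : ℂ) * (Real.sin (x 2) : ℂ) * qC a x
    / ((Real.sqrt (q2 a x) ^ 3 : ℝ) : ℂ)

/-- `H̲₁ = −i a sinθ · q̄ / |q|³`. -/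
def Hb1 (a : ℝ) (x : Pt) : ℂ :=
  -(Complex.I * (a : ℂ) * (Real.sin (x 2) : ℂ) * qbarC a x
    / ((Real.sqrt (q2 a x) ^ 3 : ℝ) : ℂ))

/-- `Z₁ = i a sinθ · q̄ / |q|³`. -/
def Z1 (a : ℝ) (x : Pt) : ℂ :=
  Complex.I * (a : ℂ) * (Real.sin (x 2) : ℂ) * qbarC a x
    / ((Real.sqrt (q2 a x) ^ 3 : ℝ) : ℂ)

/-- `P^F = Q/q̄²`. -/
def PF (a Q : ℝ) (x : Pt) : ℂ := (Q : ℂ) / qbarC a x ^ 2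

/-- `P = −2M/q³ + 2Q²/(q³ q̄)`. -/
def Pc (M a Q : ℝ) (x : Pt) : ℂ :=
  -2 * (M : ℂ) / qC a x ^ 3 + 2 * (Q : ℂ) ^ 2 / (qC a x ^ 3 * qbarC a x)

/-- `ω̲ = (a² cos²θ (r−M) + Mr² − a²r − Q²r)/|q|⁴`. -/
def omb (M a Q : ℝ) (x : Pt) : ℝ :=
  (a ^ 2 * Real.cos (x 2) ^ 2 * (x 1 - M) + M * x 1 ^ 2 - a ^ 2 * x 1 - Q ^ 2 * x 1)
    / q2 a x ^ 2

/-- `trχ̲ = −2rΔ/|q|⁴`. -/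
def trchib (M a Q : ℝ) (x : Pt) : ℝ := -(2 * x 1 * Del M a Q x) / q2 a x ^ 2

/-- `atrχ̲ = 2aΔ cosθ/|q|⁴`. -/
def atrchib (M a Q : ℝ) (x : Pt) : ℝ :=
  2 * a * Del M a Q x * Real.cos (x 2) / q2 a x ^ 2

/-- `atrχ = 2a cosθ/|q|²`. -/
def atrchi (a : ℝ) (x : Pt) : ℝ := 2 * a * Real.cos (x 2) / q2 a x

/-- `η₁ = −a² sinθ cosθ/|q|³`. -/
def eta1 (a : ℝ) (x : Pt) : ℝ :=
  -(a ^ 2 * Real.sin (x 2) * Real.cos (x 2)) / Real.sqrt (q2 a x) ^ 3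

/-- `η₂ = a r sinθ/|q|³`. -/
def eta2 (a : ℝ) (x : Pt) : ℝ := a * x 1 * Real.sin (x 2) / Real.sqrt (q2 a x) ^ 3

/-- `η̲₁ = −a² sinθ cosθ/|q|³`. -/
def etab1 (a : ℝ) (x : Pt) : ℝ :=
  -(a ^ 2 * Real.sin (x 2) * Real.cos (x 2)) / Real.sqrt (q2 a x) ^ 3

/-- `η̲₂ = −a r sinθ/|q|³`. -/
def etab2 (a : ℝ) (x : Pt) : ℝ := -(a * x 1 * Real.sin (x 2)) / Real.sqrt (q2 a x) ^ 3

/-- `*η₁ = a r sinθ/|q|³`. -/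
def seta1 (a : ℝ) (x : Pt) : ℝ := a * x 1 * Real.sin (x 2) / Real.sqrt (q2 a x) ^ 3

/-- `*η₂ = a² sinθ cosθ/|q|³`. -/
def seta2 (a : ℝ) (x : Pt) : ℝ :=
  a ^ 2 * Real.sin (x 2) * Real.cos (x 2) / Real.sqrt (q2 a x) ^ 3

/-- `*η̲₁ = −a r sinθ/|q|³`. -/
def setab1 (a : ℝ) (x : Pt) : ℝ := -(a * x 1 * Real.sin (x 2)) / Real.sqrt (q2 a x) ^ 3

/-- `*η̲₂ = a² sinθ cosθ/|q|³`. -/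
def setab2 (a : ℝ) (x : Pt) : ℝ :=
  a ^ 2 * Real.sin (x 2) * Real.cos (x 2) / Real.sqrt (q2 a x) ^ 3

/-- `ρ = (−2Mr³ + 2Q²r² + 6Ma²r cos²θ − 2Q²a² cos²θ)/|q|⁶`. -/
def rho (M a Q : ℝ) (x : Pt) : ℝ :=
  (-2 * M * x 1 ^ 3 + 2 * Q ^ 2 * x 1 ^ 2 + 6 * M * a ^ 2 * x 1 * Real.cos (x 2) ^ 2
      - 2 * Q ^ 2 * a ^ 2 * Real.cos (x 2) ^ 2) / q2 a x ^ 3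

/-- `tr X̲ = trχ̲ − i atrχ̲` (component form). -/
def trXbC (M a Q : ℝ) (x : Pt) : ℂ :=
  ((trchib M a Q x : ℝ) : ℂ) - Complex.I * ((atrchib M a Q x : ℝ) : ℂ)

/-- `C = c·trχ̲ + i p·atrχ̲`. -/
def Cfun (M a Q c p : ℝ) (x : Pt) : ℂ :=
  ((c * trchib M a Q x : ℝ) : ℂ) + Complex.I * ((p : ℝ) : ℂ) * ((atrchib M a Q x : ℝ) : ℂ)

/-! Both `conj trX = 2 / q̄` and `conj tr X̲ = -2Δ / (q̄ q²)` depend on `(r, θ)` only, so `e₂`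
kills them and `e₁ + i e₂` acts as `|q|⁻¹ ∂_θ`. Since `∂_θ q̄ = i a sin θ = -∂_θ q`, each equation
becomes a rational identity in `q`, `q̄` and `|q|`, closed by `q q̄ = |q|²`. -/

section PartialDerivatives

variable {ι F : Type*} [Fintype ι] [DecidableEq ι] [NormedAddCommGroup F] [NormedSpace ℝ F]
  {f : (ι → ℝ) → F} {x : ι → ℝ}

theorem fderiv_apply_single_eq_of_hasDerivAt_update {i : ι} {d : F}
    (hf : DifferentiableAt ℝ f x) (hd : HasDerivAt (fun s => f (Function.update x i s)) d (x i)) :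
    fderiv ℝ f x (Pi.single i 1) = d := by
  have hx : Function.update x i (x i) = x := Function.update_eq_self i x
  have hcomp := (hx ▸ hf).hasFDerivAt.comp_hasDerivAt (x i) (hasDerivAt_update x i (x i))
  rw [hx] at hcomp
  exact hcomp.unique hd

theorem fderiv_apply_single_eq_zero_of_update_eq {i : ι}
    (h : ∀ s, f (Function.update x i s) = f x) : fderiv ℝ f x (Pi.single i 1) = 0 := by
  by_cases hf : DifferentiableAt ℝ f x
  · refine fderiv_apply_single_eq_of_hasDerivAt_update hf ?_
    simpa only [h] using hasDerivAt_const (x i) (f x)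
  · simp [fderiv_zero_of_not_differentiableAt hf]

end PartialDerivatives

theorem e2_eq_zero_of_update_eq {a : ℝ} {f : Pt → ℂ} {x : Pt}
    (h₀ : ∀ s, f (Function.update x 0 s) = f x) (h₃ : ∀ s, f (Function.update x 3 s) = f x) :
    e2 a f x = 0 := by
  simp [e2, pdC, fderiv_apply_single_eq_zero_of_update_eq h₀,
    fderiv_apply_single_eq_zero_of_update_eq h₃]

section Coordinates

variable {M a Q : ℝ} {x : Pt}

theorem conj_qC (a : ℝ) (x : Pt) : starRingEnd ℂ (qC a x) = qbarC a x := by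
  simp only [qC, qbarC, map_add, map_mul, Complex.conj_ofReal, Complex.conj_I]
  ring

theorem qC_mul_qbarC (a : ℝ) (x : Pt) : qC a x * qbarC a x = q2 a x := by
  simp only [qC, qbarC, q2]
  push_cast
  ring_nf
  rw [Complex.I_sq]
  ring

theorem q2_pos (hr : 0 < x 1) : 0 < q2 a x := by
  unfold q2; positivity

theorem qC_ne_zero (hr : 0 < x 1) : qC a x ≠ 0 := fun h => by
  simpa [qC, hr.ne'] using congrArg Complex.re h

theorem qbarC_ne_zero (hr : 0 < x 1) : qbarC a x ≠ 0 := by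
  rw [← conj_qC]; exact (map_ne_zero _).2 (qC_ne_zero hr)

theorem ofReal_sqrt_q2_ne_zero (hr : 0 < x 1) : (Real.sqrt (q2 a x) : ℂ) ≠ 0 := by
  exact_mod_cast (Real.sqrt_pos.2 (q2_pos hr)).ne'

theorem sqrt_q2_pow_three (hr : 0 < x 1) :
    ((Real.sqrt (q2 a x) ^ 3 : ℝ) : ℂ) = Real.sqrt (q2 a x) * (qC a x * qbarC a x) := by
  rw [qC_mul_qbarC, pow_succ, Real.sq_sqrt (q2_pos hr).le]
  push_cast; ring

theorem conj_trX (a : ℝ) (x : Pt) : starRingEnd ℂ (trX a x) = 2 / qbarC a x := by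
  rw [trX, map_div₀, map_ofNat, conj_qC]

theorem conj_trXb (M a Q : ℝ) (x : Pt) :
    starRingEnd ℂ (trXb M a Q x) = -2 * (Del M a Q x : ℂ) / (qbarC a x * qC a x ^ 2) := by
  rw [trXb, map_div₀, map_mul, map_mul, map_pow, conj_qC, ← conj_qC, Complex.conj_conj]
  rw [map_neg, map_ofNat, Complex.conj_ofReal, mul_comm]

@[fun_prop]
theorem differentiable_qC (a : ℝ) : Differentiable ℝ (qC a) := by
  unfold qC; fun_prop

@[fun_prop]
theorem differentiable_qbarC (a : ℝ) : Differentiable ℝ (qbarC a) := by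
  unfold qbarC; fun_prop

@[fun_prop]
theorem differentiable_Del (M a Q : ℝ) : Differentiable ℝ (Del M a Q) := by
  unfold Del; fun_prop

theorem hasDerivAt_qC_update (a : ℝ) (x : Pt) :
    HasDerivAt (fun s => qC a (Function.update x 2 s))
      (-(Complex.I * a * Real.sin (x 2))) (x 2) := by
  simp only [qC, Function.update_self, Function.update_of_ne (show (1 : Fin 4) ≠ 2 by decide)]
  refine (((Real.hasDerivAt_cos (x 2)).ofReal_comp.const_mul (Complex.I * a)).const_add
    (x 1 : ℂ)).congr_deriv ?_
  push_cast; ring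

theorem hasDerivAt_qbarC_update (a : ℝ) (x : Pt) :
    HasDerivAt (fun s => qbarC a (Function.update x 2 s))
      (Complex.I * a * Real.sin (x 2)) (x 2) := by
  simp only [qbarC, Function.update_self, Function.update_of_ne (show (1 : Fin 4) ≠ 2 by decide)]
  refine (((Real.hasDerivAt_cos (x 2)).ofReal_comp.const_mul (Complex.I * a)).const_sub
    (x 1 : ℂ)).congr_deriv ?_
  push_cast; ring

theorem pdC_two_conj_trX (hr : 0 < x 1) :
    pdC 2 (fun y => starRingEnd ℂ (trX a y)) x
      = -(2 * Complex.I * a * Real.sin (x 2)) / qbarC a x ^ 2 := by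
  simp only [pdC, conj_trX]
  have hne := qbarC_ne_zero (a := a) hr
  refine fderiv_apply_single_eq_of_hasDerivAt_update (by fun_prop (disch := exact hne)) ?_
  refine ((hasDerivAt_const (x 2) (2 : ℂ)).fun_div (hasDerivAt_qbarC_update a x)
    (by rwa [Function.update_eq_self])).congr_deriv ?_
  rw [Function.update_eq_self]
  ring

theorem pdC_two_conj_trXb (hr : 0 < x 1) :
    pdC 2 (fun y => starRingEnd ℂ (trXb M a Q y)) x
      = 2 * (Del M a Q x : ℂ) * Complex.I * a * Real.sin (x 2)
          * (qC a x ^ 2 - 2 * qC a x * qbarC a x) / (qbarC a x ^ 2 * qC a x ^ 4) := by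
  simp only [pdC, conj_trXb]
  have hden : qbarC a x * qC a x ^ 2 ≠ 0 :=
    mul_ne_zero (qbarC_ne_zero hr) (pow_ne_zero 2 (qC_ne_zero hr))
  refine fderiv_apply_single_eq_of_hasDerivAt_update
    (by simp only [div_eq_mul_inv]; fun_prop (disch := exact hden)) ?_
  have hDel : ∀ s, Del M a Q (Function.update x 2 s) = Del M a Q x := fun s => by simp [Del]
  simp only [hDel]
  have hq := hasDerivAt_qC_update a x
  have hqb := hasDerivAt_qbarC_update a x
  rw [← Function.update_eq_self 2 x] at hden
  refine ((hasDerivAt_const (x 2) _).fun_div (hqb.fun_mul (hq.fun_pow 2)) hden).congr_deriv ?_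
  rw [Function.update_eq_self]
  have := qC_ne_zero (a := a) hr
  have := qbarC_ne_zero (a := a) hr
  field_simp
  ring

theorem e2_conj_trX (a : ℝ) (x : Pt) : e2 a (fun y => starRingEnd ℂ (trX a y)) x = 0 :=
  e2_eq_zero_of_update_eq (fun s => by simp [conj_trX, qbarC]) (fun s => by simp [conj_trX, qbarC])

theorem e2_conj_trXb (M a Q : ℝ) (x : Pt) : e2 a (fun y => starRingEnd ℂ (trXb M a Q y)) x = 0 :=
  e2_eq_zero_of_update_eq (fun s => by simp [conj_trXb, qC, qbarC, Del])
    (fun s => by simp [conj_trXb, qC, qbarC, Del])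

theorem codazzi_trX (hr : 0 < x 1) :
    (e1 a (fun y => starRingEnd ℂ (trX a y)) x
        + Complex.I * e2 a (fun y => starRingEnd ℂ (trX a y)) x)
        + Z1 a x * starRingEnd ℂ (trX a x)
      = (trX a x - starRingEnd ℂ (trX a x)) * H1 a x := by
  rw [e2_conj_trX, e1, pdC_two_conj_trX hr, conj_trX]
  simp only [Z1, H1, trX, sqrt_q2_pow_three hr]
  have := qC_ne_zero (a := a) hr
  have := qbarC_ne_zero (a := a) hr
  have := ofReal_sqrt_q2_ne_zero (a := a) hr
  push_cast
  field_simp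
  ring

theorem codazzi_trXb (hr : 0 < x 1) :
    (e1 a (fun y => starRingEnd ℂ (trXb M a Q y)) x
        + Complex.I * e2 a (fun y => starRingEnd ℂ (trXb M a Q y)) x)
        - Z1 a x * starRingEnd ℂ (trXb M a Q x)
      = (trXb M a Q x - starRingEnd ℂ (trXb M a Q x)) * Hb1 a x := by
  rw [e2_conj_trXb, e1, pdC_two_conj_trXb hr, conj_trXb]
  simp only [Z1, Hb1, trXb, sqrt_q2_pow_three hr]
  have := qC_ne_zero (a := a) hr
  have := qbarC_ne_zero (a := a) hr
  have := ofReal_sqrt_q2_ne_zero (a := a) hr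
  push_cast
  field_simp
  ring

end Coordinates

theorem codazzi_general (M a Q : ℝ) (x : Pt)
    (hr : 0 < x 1) :
    (e1 a (fun y => (starRingEnd ℂ) (trX a y)) x
        + Complex.I * e2 a (fun y => (starRingEnd ℂ) (trX a y)) x)
        + Z1 a x * (starRingEnd ℂ) (trX a x)
      = (trX a x - (starRingEnd ℂ) (trX a x)) * H1 a x ∧
    (e1 a (fun y => (starRingEnd ℂ) (trXb M a Q y)) x
        + Complex.I * e2 a (fun y => (starRingEnd ℂ) (trXb M a Q y)) x)
        - Z1 a x * (starRingEnd ℂ) (trXb M a Q x)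
      = (trXb M a Q x - (starRingEnd ℂ) (trXb M a Q x)) * Hb1 a x :=
  ⟨codazzi_trX hr, codazzi_trXb hr⟩

/-- on `D`, the reduced Codazzi equations of Kerr–Newman hold:
`(e₁+ie₂)(conj(trX)) + Z₁·conj(trX) = (trX − conj(trX)) H₁` and
`(e₁+ie₂)(conj(tr X̲)) − Z₁·conj(tr X̲) = (tr X̲ − conj(tr X̲)) H̲₁`. -/
theorem codazzi (M a Q : ℝ) (x : Pt)
    (hr : 0 < x 1) (hθ₀ : 0 < x 2) (hθπ : x 2 < Real.pi)
    (hΔ : Del M a Q x ≠ 0) :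
    (e1 a (fun y => (starRingEnd ℂ) (trX a y)) x
        + Complex.I * e2 a (fun y => (starRingEnd ℂ) (trX a y)) x)
        + Z1 a x * (starRingEnd ℂ) (trX a x)
      = (trX a x - (starRingEnd ℂ) (trX a x)) * H1 a x ∧
    (e1 a (fun y => (starRingEnd ℂ) (trXb M a Q y)) x
        + Complex.I * e2 a (fun y => (starRingEnd ℂ) (trXb M a Q y)) x)
        - Z1 a x * (starRingEnd ℂ) (trXb M a Q x)
      = (trXb M a Q x - (starRingEnd ℂ) (trXb M a Q x)) * Hb1 a x :=
  codazzi_general M a Q x hr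

end KerrNewman
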